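/- For all nonnegative integers a, b, n with a + b ≤ n and n ≥ 1, the quantity ψ(n,a,b) := n^{−1} · ∑_{j=a+1}^{a+b} (n − 1 + κ_{j−1} + κ_{n−j} − κ_n) · (b − 1 + κ_{j−1−a} + κ_{b+a−j} − κ_b) is nonnegative: ψ(n,a,b) ≥ 0. -/

import Mathlib

open Finset Filter Topology

/-- The `n`-th harmonic number `H_n = ∑_{i=1}^n 1/i`. -/
noncomputable def H (n : ℕ) : ℝ := ∑ i ∈ Finset.range n, (1 : ℝ) / (i + 1)

/-- `κ_n = 2(n+1)H_n - 4n`, the mean number of key comparisons for QuickSort on `n` keys. -/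
noncomputable def κ (n : ℕ) : ℝ := 2 * (n + 1) * H n - 4 * n

/-!
Let `f_n(j) = pivotDev n j` be the expected QuickSort cost on `n` keys given pivot rank `j`,
minus its mean `κ n`. It sums to zero over `j` (the QuickSort recurrence), is symmetric under
`j ↦ n + 1 - j`, and its increments `2 (H_j - H_{n-j})` make it nonincreasing up to the middle.
So the partial sums `G(i) = ∑_{k ≤ i} f_b(k) = pivotDevSum b i` satisfy `G(b - i) = -G(i)`, and
Chebyshev's sum inequality gives `G(i) ≥ 0` for `2 i ≤ b`. Summation by parts turns `n ψ` into
`2 ∑_{0 < j < b} (H_{n-a-j} - H_{a+j}) G(j)`; pairing `j` with `b - j`, both the weight difference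
and `G(j)` change sign at the middle, so every pair contributes a nonnegative amount.
-/

lemma H_succ (m : ℕ) : H (m + 1) = H m + 1 / (m + 1) := by
  simp [H, Finset.sum_range_succ]

lemma H_mono : Monotone H :=
  monotone_nat_of_le_succ fun m => by
    rw [H_succ]
    exact le_add_of_nonneg_right (by positivity)

lemma κ_succ (m : ℕ) : κ (m + 1) = κ m + 2 * H (m + 1) - 2 := by
  simp only [κ, H_succ]
  push_cast
  field_simp
  ring

lemma natCast_mul_κ (n : ℕ) : (n : ℝ) * κ n = n * (n - 1) + 2 * ∑ k ∈ range n, κ k := by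
  induction n with
  | zero => simp
  | succ n ih =>
    rw [sum_range_succ, κ_succ, H_succ]
    simp only [κ] at ih ⊢
    push_cast
    field_simp
    linear_combination ih

noncomputable def pivotDev (n j : ℕ) : ℝ := (n : ℝ) - 1 + κ (j - 1) + κ (n - j) - κ n

noncomputable def pivotDevSum (n i : ℕ) : ℝ := ∑ k ∈ range i, pivotDev n (k + 1)

lemma pivotDev_succ {n j : ℕ} (hj : 1 ≤ j) (hjn : j < n) :
    pivotDev n (j + 1) = pivotDev n j + 2 * (H j - H (n - j)) := by
  obtain ⟨i, rfl⟩ : ∃ i, j = i + 1 := ⟨j - 1, by omega⟩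
  obtain ⟨d, rfl⟩ : ∃ d, n = i + 2 + d := ⟨n - (i + 2), by omega⟩
  simp only [pivotDev, show i + 2 + d - (i + 1 + 1) = d by omega,
    show i + 2 + d - (i + 1) = d + 1 by omega, Nat.add_sub_cancel, κ_succ]
  ring

lemma pivotDev_reflect {n j : ℕ} (hj : j ≤ n + 1) : pivotDev n (n + 1 - j) = pivotDev n j := by
  simp only [pivotDev, show n + 1 - j - 1 = n - j by omega, show n - (n + 1 - j) = j - 1 by omega]
  ring

lemma sum_pivotDev (n : ℕ) : ∑ k ∈ range n, pivotDev n (k + 1) = 0 := by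
  have hreflect : ∑ k ∈ range n, κ (n - (k + 1)) = ∑ k ∈ range n, κ k := by
    rw [← sum_range_reflect]
    exact sum_congr rfl fun k hk => by rw [mem_range] at hk; congr 1; omega
  simp only [pivotDev, Nat.add_sub_cancel, sum_sub_distrib, sum_add_distrib, hreflect, sum_const,
    card_range, nsmul_eq_mul]
  linear_combination -natCast_mul_κ n

/-- Chebyshev's sum inequality for `f` and the indicator of `range i`. -/
lemma AntitoneOn.natCast_mul_sum_range_le {α : Type*} [CommRing α] [LinearOrder α]
    [IsStrictOrderedRing α] {f : ℕ → α} {i m : ℕ} (hf : AntitoneOn f (range m))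
    (hi : i ≤ m) :
    (i : α) * ∑ k ∈ range m, f k ≤ m * ∑ k ∈ range i, f k := by
  set g : ℕ → α := fun k => if k < i then 1 else 0
  have hg : Antitone g := fun k l hkl => by
    simp only [g]
    split_ifs <;> first | omega | norm_num
  have hfilter : (range m).filter (· < i) = range i := by
    ext k
    simp only [mem_filter, mem_range]
    omega
  have chebyshev := (hf.monovaryOn (hg.antitoneOn _)).sum_mul_sum_le_card_mul_sum
  simp only [g, mul_ite, mul_one, mul_zero, ← sum_filter, hfilter, sum_const, card_range,
    nsmul_eq_mul] at chebyshev
  linarith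

lemma pivotDev_antitoneOn {n m : ℕ} (hm : m ≤ n / 2 + 1) :
    AntitoneOn (fun k => pivotDev n (k + 1)) (range m) := by
  rw [coe_range]
  refine antitoneOn_of_succ_le Set.ordConnected_Iio fun k _ _ hk => ?_
  rw [Order.succ_eq_add_one, Set.mem_Iio] at hk
  rw [Order.succ_eq_add_one, pivotDev_succ (by omega) (by omega)]
  have : H (k + 1) ≤ H (n - (k + 1)) := H_mono (by omega)
  linarith

lemma pivotDevSum_sub {n i : ℕ} (hi : i ≤ n) : pivotDevSum n (n - i) = -pivotDevSum n i := by
  have hsplit : ∑ k ∈ range n, pivotDev n (k + 1) =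
      pivotDevSum n i + ∑ k ∈ range (n - i), pivotDev n (i + k + 1) := by
    have := sum_range_add (fun k => pivotDev n (k + 1)) i (n - i)
    rwa [Nat.add_sub_cancel' hi] at this
  have htail : ∑ k ∈ range (n - i), pivotDev n (i + k + 1) = pivotDevSum n (n - i) := by
    rw [pivotDevSum, ← sum_range_reflect]
    refine sum_congr rfl fun k hk => ?_
    rw [mem_range] at hk
    rw [← pivotDev_reflect (by omega)]
    congr 1
    omega
  linarith [sum_pivotDev n]

lemma pivotDevSum_half_nonneg (n : ℕ) : 0 ≤ pivotDevSum n (n / 2) := by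
  have hcheb := (pivotDev_antitoneOn (n := n) (m := n - n / 2) (by omega)).natCast_mul_sum_range_le
    (i := n / 2) (by omega)
  rw [← pivotDevSum, ← pivotDevSum, pivotDevSum_sub (Nat.div_le_self n 2)] at hcheb
  rcases Nat.eq_zero_or_pos n with rfl | hn
  · simp [pivotDevSum]
  · have hsplit : (n : ℝ) * pivotDevSum n (n / 2) =
        ((n / 2 : ℕ) + (n - n / 2 : ℕ) : ℝ) * pivotDevSum n (n / 2) := by
      rw [← Nat.cast_add, Nat.add_sub_cancel' (Nat.div_le_self n 2)]
    refine nonneg_of_mul_nonneg_right (a := (n : ℝ)) ?_ (by exact_mod_cast hn)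
    linarith

lemma pivotDevSum_nonneg {n i : ℕ} (hi : 2 * i ≤ n) : 0 ≤ pivotDevSum n i := by
  have hcheb := (pivotDev_antitoneOn (n := n) (m := n / 2) (by omega)).natCast_mul_sum_range_le
    (i := i) (by omega)
  rw [← pivotDevSum, ← pivotDevSum] at hcheb
  rcases Nat.eq_zero_or_pos (n / 2) with hn | hn
  · simp [pivotDevSum, show i = 0 by omega]
  · refine nonneg_of_mul_nonneg_right ?_ (by exact_mod_cast hn : (0 : ℝ) < (n / 2 : ℕ))
    exact (mul_nonneg (Nat.cast_nonneg i) (pivotDevSum_half_nonneg n)).trans hcheb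

lemma antitone_H_sub_sub_H (a n : ℕ) : Antitone fun j => H (n - (a + j)) - H (a + j) :=
  fun _ _ hjk => sub_le_sub (H_mono (by omega)) (H_mono (by omega))

lemma pivotDevSum_pair_nonneg (a n : ℕ) {b j : ℕ} (hj : j ≤ b) :
    0 ≤ (H (n - (a + j)) - H (a + j)) * pivotDevSum b j +
      (H (n - (a + (b - j))) - H (a + (b - j))) * pivotDevSum b (b - j) := by
  rw [pivotDevSum_sub hj, mul_neg, ← sub_eq_add_neg, ← sub_mul]
  rcases le_total (2 * j) b with hle | hge
  · exact mul_nonneg (sub_nonneg.2 (antitone_H_sub_sub_H a n (by omega))) (pivotDevSum_nonneg hle)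
  · have hpos := pivotDevSum_nonneg (n := b) (i := b - j) (by omega)
    rw [pivotDevSum_sub hj] at hpos
    exact mul_nonneg_of_nonpos_of_nonpos (sub_nonpos.2 (antitone_H_sub_sub_H a n (by omega)))
      (by linarith)

lemma sum_range_nonneg_of_add_reflect_nonneg {α : Type*} [Field α] [LinearOrder α]
    [IsStrictOrderedRing α] {T : ℕ → α} {N : ℕ}
    (hT : ∀ i < N, 0 ≤ T i + T (N - 1 - i)) :
    0 ≤ ∑ i ∈ range N, T i := by
  have hsum := sum_nonneg fun i hi => hT i (mem_range.1 hi)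
  rw [sum_add_distrib, sum_range_reflect] at hsum
  linarith

lemma sum_pivotDev_mul_pivotDev {a b n : ℕ} (h : a + b ≤ n) :
    ∑ i ∈ range b, pivotDev n (a + 1 + i) * pivotDev b (i + 1) =
      2 * ∑ i ∈ range (b - 1),
        (H (n - (a + (i + 1))) - H (a + (i + 1))) * pivotDevSum b (i + 1) := by
  have abel := sum_range_by_parts (fun i => pivotDev n (a + 1 + i)) (fun i => pivotDev b (i + 1)) b
  simp only [smul_eq_mul, sum_pivotDev, mul_zero, zero_sub] at abel
  rw [abel, mul_sum, ← sum_neg_distrib]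
  refine sum_congr rfl fun i hi => ?_
  rw [mem_range] at hi
  rw [show a + 1 + (i + 1) = a + 1 + i + 1 by ring, pivotDev_succ (by omega) (by omega),
    show a + 1 + i = a + (i + 1) by ring, pivotDevSum]
  ring

theorem psi_nonneg_general (a b n : ℕ) (h : a + b ≤ n) :
    0 ≤ (n : ℝ)⁻¹ * ∑ j ∈ Finset.Icc (a + 1) (a + b),
      ((n : ℝ) - 1 + κ (j - 1) + κ (n - j) - κ n) *
        ((b : ℝ) - 1 + κ (j - 1 - a) + κ (b + a - j) - κ b) := by
  have hreindex : ∑ j ∈ Icc (a + 1) (a + b),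
      ((n : ℝ) - 1 + κ (j - 1) + κ (n - j) - κ n) *
        ((b : ℝ) - 1 + κ (j - 1 - a) + κ (b + a - j) - κ b) =
      ∑ i ∈ range b, pivotDev n (a + 1 + i) * pivotDev b (i + 1) := by
    rw [← Ico_add_one_right_eq_Icc, sum_Ico_eq_sum_range, show a + b + 1 - (a + 1) = b by omega]
    refine sum_congr rfl fun i hi => ?_
    rw [mem_range] at hi
    simp only [pivotDev, show a + 1 + i - 1 - a = i by omega,
      show b + a - (a + 1 + i) = b - (i + 1) by omega, Nat.add_sub_cancel]
  rw [hreindex, sum_pivotDev_mul_pivotDev h]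
  refine mul_nonneg (by positivity) (mul_nonneg zero_le_two ?_)
  refine sum_range_nonneg_of_add_reflect_nonneg fun i hi => ?_
  rw [show b - 1 - 1 - i + 1 = b - (i + 1) by omega]
  exact pivotDevSum_pair_nonneg a n (by omega)

theorem psi_nonneg (a b n : ℕ) (h : a + b ≤ n) (hn : 1 ≤ n) :
    0 ≤ (n : ℝ)⁻¹ * ∑ j ∈ Finset.Icc (a + 1) (a + b),
      ((n : ℝ) - 1 + κ (j - 1) + κ (n - j) - κ n) *
        ((b : ℝ) - 1 + κ (j - 1 - a) + κ (b + a - j) - κ b) :=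
  psi_nonneg_general a b n h
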